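/- For p > 2 and all w, z ∈ R², the inequality J_p^{(++)}(w,z) + F_p(w,z) ≥ 0 holds, where J_p^{(++)} is the Taylor-type remainder of (z₁,z₂) ↦ (z₁)₊((z₂)₊)^{p-1} with Heaviside factor 1(a) = (1+sgn a)/2, and F_p is the two-dimensional Bregman divergence. -/

import Mathlib

noncomputable def norm2 (z : ℝ × ℝ) : ℝ := Real.sqrt (z.1 ^ 2 + z.2 ^ 2)

noncomputable def bregmanF2 (p : ℝ) (w z : ℝ × ℝ) : ℝ :=
  norm2 z ^ p - norm2 w ^ p -
    p * norm2 w ^ (p - 2) * (w.1 * (z.1 - w.1) + w.2 * (z.2 - w.2))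

/-- Heaviside step function `1(a) = (1 + sgn a)/2`, so `1(0) = 1/2`. -/
noncomputable def heaviside (a : ℝ) : ℝ := (1 + Real.sign a) / 2

noncomputable def Jpp (p : ℝ) (w z : ℝ × ℝ) : ℝ :=
  max z.1 0 * (max z.2 0) ^ (p - 1) - max w.1 0 * (max w.2 0) ^ (p - 1)
    - heaviside w.1 * (max w.2 0) ^ (p - 1) * (z.1 - w.1)
    - (p - 1) * max w.1 0 * (max w.2 0) ^ (p - 2) * (z.2 - w.2)

section AuxLemmas

open Real Set Filter Topology


lemma young_aux {p : ℝ} (hp : 2 < p) {r s : ℝ} (hr : 0 ≤ r) (hs : 0 ≤ s) :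
    p * s ^ (p - 1) * r ≤ r ^ p + (p - 1) * s ^ p := by
  rcases eq_or_lt_of_le hs with h | hs
  · rw [← h, Real.zero_rpow (by norm_num; linarith : p - 1 ≠ 0),
      Real.zero_rpow (by positivity : p ≠ 0)]
    have : (0:ℝ) ≤ r ^ p := Real.rpow_nonneg hr p
    linarith
  · have hrs : (0:ℝ) ≤ r / s := by positivity
    have hB := one_add_mul_self_le_rpow_one_add
      (s := r / s - 1) (by linarith) (p := p) (by linarith)
    rw [show 1 + (r / s - 1) = r / s by ring, Real.div_rpow hr hs.le] at hB
    have hsp : (0:ℝ) < s ^ p := Real.rpow_pos_of_pos hs p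
    have e2 : s ^ (p - 1) * s = s ^ p := by
      rw [← Real.rpow_add_one hs.ne' (p - 1)]; ring_nf
    have h1 : (1 + p * (r / s - 1)) * s ^ p ≤ r ^ p := by
      have := mul_le_mul_of_nonneg_right hB hsp.le
      rwa [div_mul_cancel₀ _ hsp.ne'] at this
    have e3 : p * (r / s * s ^ p) = p * (s ^ (p - 1) * r) := by
      rw [← e2]; field_simp
    nlinarith [h1, e3]

lemma norm2_rpow (z : ℝ × ℝ) (q : ℝ) : norm2 z ^ q = (z.1 ^ 2 + z.2 ^ 2) ^ (q / 2) := by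
  have h : (0:ℝ) ≤ z.1 ^ 2 + z.2 ^ 2 := by positivity
  rw [norm2, Real.sqrt_eq_rpow, ← Real.rpow_mul h]
  ring_nf

lemma bregman_nonneg {p : ℝ} (hp : 2 < p) (w z : ℝ × ℝ) : 0 ≤ bregmanF2 p w z := by
  have hs : 0 ≤ norm2 w := Real.sqrt_nonneg _
  have hr : 0 ≤ norm2 z := Real.sqrt_nonneg _
  have hs2 : norm2 w ^ 2 = w.1 ^ 2 + w.2 ^ 2 := Real.sq_sqrt (by positivity)
  rcases eq_or_lt_of_le hs with h | hs
  · have hw1 : w.1 = 0 := by nlinarith [sq_nonneg w.1, sq_nonneg w.2]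
    have hw2 : w.2 = 0 := by nlinarith [sq_nonneg w.1, sq_nonneg w.2]
    rw [bregmanF2, ← h, Real.zero_rpow (by positivity : p ≠ 0), hw1, hw2]
    have : (0:ℝ) ≤ norm2 z ^ p := Real.rpow_nonneg hr p
    simp; linarith
  · -- s > 0
    have hcs : w.1 * z.1 + w.2 * z.2 ≤ norm2 w * norm2 z := by
      have h1 : (w.1 * z.1 + w.2 * z.2) ^ 2 ≤ (w.1 ^ 2 + w.2 ^ 2) * (z.1 ^ 2 + z.2 ^ 2) := by
        nlinarith [sq_nonneg (w.1 * z.2 - w.2 * z.1)]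
      have h2 : norm2 w * norm2 z = Real.sqrt ((w.1 ^ 2 + w.2 ^ 2) * (z.1 ^ 2 + z.2 ^ 2)) :=
        (Real.sqrt_mul (by positivity) _).symm
      calc w.1 * z.1 + w.2 * z.2 ≤ |w.1 * z.1 + w.2 * z.2| := le_abs_self _
        _ = Real.sqrt ((w.1 * z.1 + w.2 * z.2) ^ 2) := (Real.sqrt_sq_eq_abs _).symm
        _ ≤ Real.sqrt ((w.1 ^ 2 + w.2 ^ 2) * (z.1 ^ 2 + z.2 ^ 2)) := Real.sqrt_le_sqrt h1
        _ = norm2 w * norm2 z := h2.symm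
    have hy := young_aux hp hr hs.le
    have hσ : (0:ℝ) ≤ p * norm2 w ^ (p - 2) := by positivity
    have hmono : p * norm2 w ^ (p - 2) * (w.1 * z.1 + w.2 * z.2)
        ≤ p * norm2 w ^ (p - 2) * (norm2 w * norm2 z) :=
      mul_le_mul_of_nonneg_left hcs hσ
    have e1 : p * (norm2 w ^ (p - 2) * norm2 w ^ 2) = p * norm2 w ^ p := by
      rw [← Real.rpow_natCast (norm2 w) 2, ← Real.rpow_add hs]; norm_num
    have e2 : p * (norm2 w ^ (p - 2) * (norm2 w * norm2 z)) = p * (norm2 w ^ (p - 1) * norm2 z) := by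
      rw [show norm2 w ^ (p-2) * (norm2 w * norm2 z) = (norm2 w ^ (p-2) * norm2 w) * norm2 z by ring,
        ← Real.rpow_add_one hs.ne' (p - 2)]; ring_nf
    have hinner : w.1 * (z.1 - w.1) + w.2 * (z.2 - w.2)
        = (w.1 * z.1 + w.2 * z.2) - norm2 w ^ 2 := by rw [hs2]; ring
    rw [bregmanF2, hinner]
    nlinarith [hy, hmono, e1, e2]


set_option maxHeartbeats 1000000 in
lemma star_open {p : ℝ} (hp : 2 < p) {a b x y : ℝ}
    (ha : 0 ≤ a) (hb : 0 < b) (hx : 0 ≤ x) (hy : 0 < y) :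
    b ^ (p-1) * x + (p-1) * a * b ^ (p-2) * y
      + p * (a^2+b^2) ^ ((p-2)/2) * (a*x + b*y)
    ≤ x * y ^ (p-1) + (x^2+y^2) ^ (p/2)
      + (p-1) * (a * b ^ (p-1) + (a^2+b^2) ^ (p/2)) := by
  obtain ⟨u, hu⟩ : ∃ u : ℝ, u = x - a := ⟨_, rfl⟩
  obtain ⟨v, hv⟩ : ∃ v : ℝ, v = y - b := ⟨_, rfl⟩
  have hA : ∀ t : ℝ, HasDerivAt (fun t => a + u * t) u t := fun t => by
    simpa using ((hasDerivAt_id t).const_mul u).const_add a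
  have hB : ∀ t : ℝ, HasDerivAt (fun t => b + v * t) v t := fun t => by
    simpa using ((hasDerivAt_id t).const_mul v).const_add b
  have hBpos : ∀ t ∈ Icc (0:ℝ) 1, 0 < b + v * t := by
    intro t ht
    have h1 : b + v * t = (1 - t)*b + t*y := by rw [hv]; ring
    have hm : 0 < min b y := lt_min hb hy
    have h2 : min b y ≤ (1-t)*b + t*y := by
      nlinarith [mul_nonneg (by linarith [ht.2] : (0:ℝ) ≤ 1-t)
          (by linarith [min_le_left b y] : (0:ℝ) ≤ b - min b y),
        mul_nonneg ht.1 (by linarith [min_le_right b y] : (0:ℝ) ≤ y - min b y)]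
    linarith
  have hApos : ∀ t ∈ Icc (0:ℝ) 1, 0 ≤ a + u * t := by
    intro t ht
    have h1 : a + u * t = (1 - t)*a + t*x := by rw [hu]; ring
    nlinarith [mul_nonneg (by linarith [ht.2] : (0:ℝ) ≤ 1-t) ha, mul_nonneg ht.1 hx]
  set g : ℝ → ℝ := fun t => (a + u*t) * (b + v*t) ^ (p-1)
      + ((a + u*t)^2 + (b + v*t)^2) ^ (p/2) with hg_def
  set g1 : ℝ → ℝ := fun t => u * (b + v*t) ^ (p-1) + (p-1) * (a + u*t) * (b + v*t) ^ (p-2) * v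
      + p * ((a + u*t)^2 + (b + v*t)^2) ^ ((p-2)/2) * ((a + u*t) * u + (b + v*t) * v) with hg1_def
  set g2 : ℝ → ℝ := fun t => 2*(p-1) * (b + v*t) ^ (p-2) * u * v
      + (p-1)*(p-2) * (a + u*t) * (b + v*t) ^ (p-3) * v^2
      + p*(p-2) * ((a + u*t)^2 + (b + v*t)^2) ^ ((p-4)/2) * ((a + u*t) * u + (b + v*t) * v)^2
      + p * ((a + u*t)^2 + (b + v*t)^2) ^ ((p-2)/2) * (u^2 + v^2) with hg2_def
  have hSpos : ∀ t : ℝ, 0 < b + v * t → 0 < (a + u*t)^2 + (b + v*t)^2 := by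
    intro t hBt; positivity
  have hg : ∀ t : ℝ, 0 < b + v * t → HasDerivAt g (g1 t) t := by
    intro t hBt
    have hSt := hSpos t hBt
    have h1 : HasDerivAt (fun t => (b + v*t) ^ (p-1)) (v * (p-1) * (b + v*t) ^ (p-2)) t := by
      have h0 := (hB t).rpow_const (p := p-1) (Or.inl hBt.ne')
      rw [show p - 1 - 1 = p - 2 by ring] at h0
      exact h0
    have h2 : HasDerivAt (fun t => (a + u*t) * (b + v*t) ^ (p-1))
        (u * (b + v*t) ^ (p-1) + (a + u*t) * (v * (p-1) * (b + v*t) ^ (p-2))) t :=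
      (hA t).mul h1
    have hS : HasDerivAt (fun t => (a + u*t)^2 + (b + v*t)^2)
        (2 * (a + u*t) * u + 2 * (b + v*t) * v) t := by
      have h0 := ((hA t).pow 2).add ((hB t).pow 2)
      exact h0.congr_deriv (by norm_num)
    have h3 : HasDerivAt (fun t => ((a + u*t)^2 + (b + v*t)^2) ^ (p/2))
        ((2 * (a + u*t) * u + 2 * (b + v*t) * v) * (p/2)
          * ((a + u*t)^2 + (b + v*t)^2) ^ ((p-2)/2)) t := by
      have h0 := hS.rpow_const (p := p/2) (Or.inl hSt.ne')
      rw [show p/2 - 1 = (p-2)/2 by ring] at h0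
      exact h0
    have h4 := h2.add h3
    have : g1 t = u * (b + v*t) ^ (p-1) + (a + u*t) * (v * (p-1) * (b + v*t) ^ (p-2))
        + (2 * (a + u*t) * u + 2 * (b + v*t) * v) * (p/2)
          * ((a + u*t)^2 + (b + v*t)^2) ^ ((p-2)/2) := by
      simp only [hg1_def]; ring
    rw [hg_def, this]
    exact h4
  have hg1 : ∀ t : ℝ, 0 < b + v * t → HasDerivAt g1 (g2 t) t := by
    intro t hBt
    have hSt := hSpos t hBt
    have hBp1 : HasDerivAt (fun t => (b + v*t) ^ (p-1)) (v * (p-1) * (b + v*t) ^ (p-2)) t := by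
      have h0 := (hB t).rpow_const (p := p-1) (Or.inl hBt.ne')
      rw [show p - 1 - 1 = p - 2 by ring] at h0
      exact h0
    have hBp2 : HasDerivAt (fun t => (b + v*t) ^ (p-2)) (v * (p-2) * (b + v*t) ^ (p-3)) t := by
      have h0 := (hB t).rpow_const (p := p-2) (Or.inl hBt.ne')
      rw [show p - 2 - 1 = p - 3 by ring] at h0
      exact h0
    have h1 : HasDerivAt (fun t => u * (b + v*t) ^ (p-1))
        (u * (v * (p-1) * (b + v*t) ^ (p-2))) t := hBp1.const_mul u
    have hprod : HasDerivAt (fun t => (a + u*t) * (b + v*t) ^ (p-2))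
        (u * (b + v*t) ^ (p-2) + (a + u*t) * (v * (p-2) * (b + v*t) ^ (p-3))) t :=
      (hA t).mul hBp2
    have h2 : HasDerivAt (fun t => (p-1) * ((a + u*t) * (b + v*t) ^ (p-2)) * v)
        ((p-1) * (u * (b + v*t) ^ (p-2) + (a + u*t) * (v * (p-2) * (b + v*t) ^ (p-3))) * v) t :=
      (hprod.const_mul (p-1)).mul_const v
    have hS : HasDerivAt (fun t => (a + u*t)^2 + (b + v*t)^2)
        (2 * (a + u*t) * u + 2 * (b + v*t) * v) t := by
      have h0 := ((hA t).pow 2).add ((hB t).pow 2)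
      exact h0.congr_deriv (by norm_num)
    have hSp : HasDerivAt (fun t => ((a + u*t)^2 + (b + v*t)^2) ^ ((p-2)/2))
        ((2 * (a + u*t) * u + 2 * (b + v*t) * v) * ((p-2)/2)
          * ((a + u*t)^2 + (b + v*t)^2) ^ ((p-4)/2)) t := by
      have h0 := hS.rpow_const (p := (p-2)/2) (Or.inl hSt.ne')
      rw [show (p-2)/2 - 1 = (p-4)/2 by ring] at h0
      exact h0
    have hlin : HasDerivAt (fun t => (a + u*t) * u + (b + v*t) * v) (u * u + v * v) t :=
      ((hA t).mul_const u).add ((hB t).mul_const v)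
    have h3 : HasDerivAt (fun t => p * ((a + u*t)^2 + (b + v*t)^2) ^ ((p-2)/2)
        * ((a + u*t) * u + (b + v*t) * v))
        ((p * ((2 * (a + u*t) * u + 2 * (b + v*t) * v) * ((p-2)/2)
          * ((a + u*t)^2 + (b + v*t)^2) ^ ((p-4)/2))) * ((a + u*t) * u + (b + v*t) * v)
          + (p * ((a + u*t)^2 + (b + v*t)^2) ^ ((p-2)/2)) * (u * u + v * v)) t :=
      (hSp.const_mul p).mul hlin
    have h4 := (h1.add h2).add h3
    have hfeq : g1 = (fun t => u * (b + v*t) ^ (p-1) + (p-1) * ((a + u*t) * (b + v*t) ^ (p-2)) * v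
        + p * ((a + u*t)^2 + (b + v*t)^2) ^ ((p-2)/2) * ((a + u*t) * u + (b + v*t) * v)) := by
      funext s; simp only [hg1_def]; ring
    have hveq : g2 t = u * (v * (p-1) * (b + v*t) ^ (p-2))
        + (p-1) * (u * (b + v*t) ^ (p-2) + (a + u*t) * (v * (p-2) * (b + v*t) ^ (p-3))) * v
        + ((p * ((2 * (a + u*t) * u + 2 * (b + v*t) * v) * ((p-2)/2)
          * ((a + u*t)^2 + (b + v*t)^2) ^ ((p-4)/2))) * ((a + u*t) * u + (b + v*t) * v)
          + (p * ((a + u*t)^2 + (b + v*t)^2) ^ ((p-2)/2)) * (u * u + v * v)) := by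
      simp only [hg2_def]; ring
    rw [hfeq, hveq]
    exact h4
  have hg2nonneg : ∀ t ∈ Icc (0:ℝ) 1, 0 ≤ g2 t := by
    intro t ht
    have hBt := hBpos t ht
    have hAt := hApos t ht
    have hSt := hSpos t hBt
    have hβ : (0:ℝ) ≤ (b + v*t) ^ (p-2) := Real.rpow_nonneg hBt.le _
    have hβ3 : (0:ℝ) ≤ (b + v*t) ^ (p-3) := Real.rpow_nonneg hBt.le _
    have hσ : (0:ℝ) ≤ ((a + u*t)^2 + (b + v*t)^2) ^ ((p-2)/2) := Real.rpow_nonneg hSt.le _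
    have hσ4 : (0:ℝ) ≤ ((a + u*t)^2 + (b + v*t)^2) ^ ((p-4)/2) := Real.rpow_nonneg hSt.le _
    have key : (b + v*t) ^ (p-2) ≤ ((a + u*t)^2 + (b + v*t)^2) ^ ((p-2)/2) := by
      have e : (b + v*t) ^ (p-2) = ((b + v*t)^2) ^ ((p-2)/2) := by
        rw [← Real.rpow_natCast (b + v*t) 2, ← Real.rpow_mul hBt.le]
        congr 1; ring
      rw [e]
      exact Real.rpow_le_rpow (sq_nonneg _) (by nlinarith [sq_nonneg (a + u*t)]) (by linarith)
    have h2' : (0:ℝ) ≤ (p-1)*(p-2) * (a + u*t) * (b + v*t) ^ (p-3) * v^2 := by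
      have h0 : (0:ℝ) ≤ (p-1)*(p-2) := by nlinarith
      exact mul_nonneg (mul_nonneg (mul_nonneg h0 hAt) hβ3) (sq_nonneg v)
    have h3' : (0:ℝ) ≤ p*(p-2) * ((a + u*t)^2 + (b + v*t)^2) ^ ((p-4)/2)
        * ((a + u*t) * u + (b + v*t) * v)^2 := by
      have h0 : (0:ℝ) ≤ p*(p-2) := by nlinarith
      exact mul_nonneg (mul_nonneg h0 hσ4) (sq_nonneg _)
    simp only [hg2_def]
    have c1 : (0:ℝ) ≤ (p-1) * ((b + v*t) ^ (p-2) * (u+v)^2) :=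
      mul_nonneg (by linarith) (mul_nonneg hβ (sq_nonneg _))
    have c2 : (0:ℝ) ≤ (p-1) * ((((a + u*t)^2 + (b + v*t)^2) ^ ((p-2)/2)
        - (b + v*t) ^ (p-2)) * (u^2+v^2)) :=
      mul_nonneg (by linarith) (mul_nonneg (sub_nonneg.2 key) (by positivity))
    have c3 : (0:ℝ) ≤ (((a + u*t)^2 + (b + v*t)^2) ^ ((p-2)/2)) * (u^2+v^2) :=
      mul_nonneg hσ (by positivity)
    linarith [h2', h3', c1, c2, c3]
  have hg1cont : ContinuousOn g1 (Icc 0 1) := fun t ht =>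
    ((hg1 t (hBpos t ht)).continuousAt).continuousWithinAt
  have hg1diff : DifferentiableOn ℝ g1 (interior (Icc (0:ℝ) 1)) := by
    rw [interior_Icc]
    intro t ht
    exact ((hg1 t (hBpos t (Ioo_subset_Icc_self ht))).differentiableAt).differentiableWithinAt
  have hmono : MonotoneOn g1 (Icc 0 1) := by
    apply monotoneOn_of_deriv_nonneg (convex_Icc 0 1) hg1cont hg1diff
    intro t ht
    rw [interior_Icc] at ht
    rw [(hg1 t (hBpos t (Ioo_subset_Icc_self ht))).deriv]
    exact hg2nonneg t (Ioo_subset_Icc_self ht)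
  have hgc : ContinuousOn g (Icc 0 1) := fun t ht =>
    ((hg t (hBpos t ht)).continuousAt).continuousWithinAt
  obtain ⟨c, hc, hceq⟩ := exists_hasDerivAt_eq_slope g g1 (by norm_num : (0:ℝ) < 1) hgc
    (fun t ht => hg t (hBpos t (Ioo_subset_Icc_self ht)))
  have hslope : g 1 - g 0 = g1 c := by rw [hceq]; norm_num
  have hle : g1 0 ≤ g1 c :=
    hmono (left_mem_Icc.2 (by norm_num)) (Ioo_subset_Icc_self hc) hc.1.le
  have hmain : g 0 + g1 0 ≤ g 1 := by linarith
  simp only [hg_def, hg1_def] at hmain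
  simp only [mul_zero, mul_one, add_zero] at hmain
  rw [hu, hv] at hmain
  have e0 : a + (x - a) = x := by ring
  have e0' : b + (y - b) = y := by ring
  rw [e0, e0'] at hmain
  -- now abstract the rpow atoms
  have e1 : b ^ (p-1) = b ^ (p-2) * b := by
    rw [show p - 1 = (p-2) + 1 by ring, Real.rpow_add_one hb.ne']
  have hS0 : (0:ℝ) < a^2 + b^2 := by positivity
  have e2 : (a^2+b^2) ^ (p/2) = (a^2+b^2) ^ ((p-2)/2) * (a^2+b^2) := by
    rw [show p/2 = (p-2)/2 + 1 by ring, Real.rpow_add_one hS0.ne']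
  rw [e1, e2] at hmain ⊢
  linarith [hmain]

lemma star_closed {p : ℝ} (hp : 2 < p) {a b x y : ℝ}
    (ha : 0 ≤ a) (hb : 0 ≤ b) (hx : 0 ≤ x) (hy : 0 ≤ y) :
    b ^ (p-1) * x + (p-1) * a * b ^ (p-2) * y
      + p * (a^2+b^2) ^ ((p-2)/2) * (a*x + b*y)
    ≤ x * y ^ (p-1) + (x^2+y^2) ^ (p/2)
      + (p-1) * (a * b ^ (p-1) + (a^2+b^2) ^ (p/2)) := by
  set L : ℝ → ℝ := fun ε => (b+ε) ^ (p-1) * x + (p-1) * a * (b+ε) ^ (p-2) * (y+ε)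
      + p * (a^2+(b+ε)^2) ^ ((p-2)/2) * (a*x + (b+ε)*(y+ε)) with hL_def
  set R : ℝ → ℝ := fun ε => x * (y+ε) ^ (p-1) + (x^2+(y+ε)^2) ^ (p/2)
      + (p-1) * (a * (b+ε) ^ (p-1) + (a^2+(b+ε)^2) ^ (p/2)) with hR_def
  have key : ∀ ε ∈ Ioi (0:ℝ), L ε ≤ R ε := by
    intro ε hε
    exact star_open hp ha (by simp at hε; linarith) hx (by simp at hε; linarith)
  -- continuity of L and R at 0
  have cb : ContinuousAt (fun ε : ℝ => b + ε) 0 := by fun_prop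
  have cy : ContinuousAt (fun ε : ℝ => y + ε) 0 := by fun_prop
  have cS : ContinuousAt (fun ε : ℝ => a^2 + (b+ε)^2) 0 := by fun_prop
  have cbp1 : ContinuousAt (fun ε : ℝ => (b+ε) ^ (p-1)) 0 :=
    ContinuousAt.rpow_const cb (Or.inr (by linarith))
  have cbp2 : ContinuousAt (fun ε : ℝ => (b+ε) ^ (p-2)) 0 :=
    ContinuousAt.rpow_const cb (Or.inr (by linarith))
  have cyp1 : ContinuousAt (fun ε : ℝ => (y+ε) ^ (p-1)) 0 :=
    ContinuousAt.rpow_const cy (Or.inr (by linarith))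
  have cSp : ContinuousAt (fun ε : ℝ => (a^2+(b+ε)^2) ^ ((p-2)/2)) 0 :=
    ContinuousAt.rpow_const cS (Or.inr (by linarith))
  have cSp2 : ContinuousAt (fun ε : ℝ => (a^2+(b+ε)^2) ^ (p/2)) 0 :=
    ContinuousAt.rpow_const cS (Or.inr (by linarith))
  have cRy : ContinuousAt (fun ε : ℝ => (x^2+(y+ε)^2) ^ (p/2)) 0 := by
    apply ContinuousAt.rpow_const _ (Or.inr (by linarith))
    fun_prop
  have hLc : ContinuousAt L 0 := by
    simp only [hL_def]
    exact ((cbp1.mul continuousAt_const).add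
        ((continuousAt_const.mul cbp2).mul cy)).add
      ((continuousAt_const.mul cSp).mul (continuousAt_const.add (cb.mul cy)))
  have hRc : ContinuousAt R 0 := by
    simp only [hR_def]
    exact ((continuousAt_const.mul cyp1).add cRy).add
      (continuousAt_const.mul ((continuousAt_const.mul cbp1).add cSp2))
  have hLt : Tendsto L (𝓝[>] (0:ℝ)) (𝓝 (L 0)) := hLc.continuousWithinAt.tendsto
  have hRt : Tendsto R (𝓝[>] (0:ℝ)) (𝓝 (R 0)) := hRc.continuousWithinAt.tendsto
  have hfinal : L 0 ≤ R 0 :=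
    le_of_tendsto_of_tendsto hLt hRt
      (eventually_nhdsWithin_of_forall key)
  simp only [hL_def, hR_def] at hfinal
  norm_num at hfinal
  convert hfinal using 2

end AuxLemmas

open Real Set in
set_option maxHeartbeats 1000000 in
theorem Jpp_add_bregman_nonneg (p : ℝ) (hp : 2 < p) (w z : ℝ × ℝ) :
    0 ≤ Jpp p w z + bregmanF2 p w z := by
  have hxz : (0:ℝ) ≤ max z.1 0 := le_max_right _ _
  have hyz : (0:ℝ) ≤ max z.2 0 := le_max_right _ _
  have hJpos : (0:ℝ) ≤ max z.1 0 * (max z.2 0) ^ (p-1) :=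
    mul_nonneg hxz (Real.rpow_nonneg hyz _)
  have hp1ne : p - 1 ≠ 0 := by intro h; rw [sub_eq_zero] at h; linarith
  have hp2ne : p - 2 ≠ 0 := by intro h; rw [sub_eq_zero] at h; linarith
  rcases le_or_gt w.2 0 with hw2 | hw2
  · have hmax : max w.2 0 = 0 := max_eq_right hw2
    have hJ : 0 ≤ Jpp p w z := by
      rw [Jpp, hmax, Real.zero_rpow hp1ne, Real.zero_rpow hp2ne]
      simpa using hJpos
    linarith [bregman_nonneg hp w z]
  rcases lt_or_ge w.1 0 with hw1 | hw1
  · have hmax : max w.1 0 = 0 := max_eq_right hw1.le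
    have hheav : heaviside w.1 = 0 := by
      rw [heaviside, Real.sign_of_neg hw1]; norm_num
    have hJ : 0 ≤ Jpp p w z := by
      rw [Jpp, hmax, hheav]
      simpa using hJpos
    linarith [bregman_nonneg hp w z]
  · -- main case : 0 ≤ w.1, 0 < w.2
    have hmaxa : max w.1 0 = w.1 := max_eq_left hw1
    have hmaxb : max w.2 0 = w.2 := max_eq_left hw2.le
    have e1 : w.2 ^ (p-1) = w.2 ^ (p-2) * w.2 := by
      rw [show p - 1 = (p-2) + 1 by ring, Real.rpow_add_one (by positivity : w.2 ≠ 0)]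
    have hS0 : (0:ℝ) < w.1^2 + w.2^2 := by positivity
    have e2 : (w.1^2+w.2^2) ^ (p/2) = (w.1^2+w.2^2) ^ ((p-2)/2) * (w.1^2+w.2^2) := by
      rw [show p/2 = (p-2)/2 + 1 by ring, Real.rpow_add_one hS0.ne']
    have hβ : (0:ℝ) ≤ w.2 ^ (p-2) := Real.rpow_nonneg hw2.le _
    have hσ : (0:ℝ) ≤ (w.1^2+w.2^2) ^ ((p-2)/2) := Real.rpow_nonneg hS0.le _
    have hz1x : z.1 ≤ max z.1 0 := le_max_left _ _
    have hz2y : z.2 ≤ max z.2 0 := le_max_left _ _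
    -- Heaviside bound
    have hH : heaviside w.1 * (w.2 ^ (p-2) * w.2) * (z.1 - w.1)
        ≤ (w.2 ^ (p-2) * w.2) * (max z.1 0 - w.1) := by
      have hc : (0:ℝ) ≤ w.2 ^ (p-2) * w.2 := mul_nonneg hβ hw2.le
      rcases eq_or_lt_of_le hw1 with h0 | h0
      · have hh : heaviside w.1 = 1/2 := by
          rw [heaviside, ← h0, Real.sign_zero]; norm_num
        rw [hh, ← h0]
        have hz : z.1 / 2 ≤ max z.1 0 := by
          rcases le_or_gt z.1 0 with h | h
          · linarith [le_max_right z.1 0]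
          · linarith [le_max_left z.1 0]
        nlinarith
      · have hh : heaviside w.1 = 1 := by
          rw [heaviside, Real.sign_of_pos h0]; norm_num
        rw [hh, one_mul]
        exact mul_le_mul_of_nonneg_left (by linarith) hc
    -- second bound
    have hT : (p-1) * w.1 * w.2 ^ (p-2) * (z.2 - w.2)
        ≤ (p-1) * w.1 * w.2 ^ (p-2) * (max z.2 0 - w.2) := by
      have hc : (0:ℝ) ≤ (p-1) * w.1 * w.2 ^ (p-2) :=
        mul_nonneg (mul_nonneg (by linarith) hw1) hβ
      exact mul_le_mul_of_nonneg_left (by linarith) hc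
    -- Jpp lower bound
    have hJb : max z.1 0 * (max z.2 0) ^ (p-1) - w.1 * (w.2 ^ (p-2) * w.2)
        - (w.2 ^ (p-2) * w.2) * (max z.1 0 - w.1)
        - (p-1) * w.1 * w.2 ^ (p-2) * (max z.2 0 - w.2) ≤ Jpp p w z := by
      rw [Jpp, hmaxa, hmaxb, e1]
      linarith [hH, hT]
    -- bregman lower bound
    have hρ : ((max z.1 0)^2+(max z.2 0)^2) ^ (p/2) ≤ norm2 z ^ p := by
      rw [norm2_rpow]
      apply Real.rpow_le_rpow (by positivity) _ (by linarith)
      have h1 : max z.1 0 ≤ |z.1| := max_le (le_abs_self _) (abs_nonneg _)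
      have h2 : max z.2 0 ≤ |z.2| := max_le (le_abs_self _) (abs_nonneg _)
      nlinarith [sq_abs z.1, sq_abs z.2, abs_nonneg z.1, abs_nonneg z.2]
    have hdot : w.1 * (z.1 - w.1) + w.2 * (z.2 - w.2)
        ≤ w.1 * (max z.1 0 - w.1) + w.2 * (max z.2 0 - w.2) := by
      nlinarith [mul_le_mul_of_nonneg_left hz1x hw1, mul_le_mul_of_nonneg_left hz2y hw2.le]
    have hmono : p * (w.1^2+w.2^2) ^ ((p-2)/2) * (w.1 * (z.1 - w.1) + w.2 * (z.2 - w.2))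
        ≤ p * (w.1^2+w.2^2) ^ ((p-2)/2)
          * (w.1 * (max z.1 0 - w.1) + w.2 * (max z.2 0 - w.2)) :=
      mul_le_mul_of_nonneg_left hdot (by positivity)
    have hFb : ((max z.1 0)^2+(max z.2 0)^2) ^ (p/2)
        - (w.1^2+w.2^2) ^ ((p-2)/2) * (w.1^2+w.2^2)
        - p * (w.1^2+w.2^2) ^ ((p-2)/2)
          * (w.1 * (max z.1 0 - w.1) + w.2 * (max z.2 0 - w.2))
        ≤ bregmanF2 p w z := by
      rw [bregmanF2]
      have en : norm2 w ^ p = (w.1^2+w.2^2) ^ ((p-2)/2) * (w.1^2+w.2^2) := by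
        rw [norm2_rpow, ← e2]
      have en2 : norm2 w ^ (p-2) = (w.1^2+w.2^2) ^ ((p-2)/2) := by
        rw [norm2_rpow]
      rw [en, en2]
      linarith [hρ, hmono]
    -- star inequality
    have hstar := star_closed hp hw1 hw2.le hxz hyz
    rw [e1, e2] at hstar
    linarith [hJb, hFb, hstar]
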